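/- Let P_{Y,S} be a joint distribution on finite sets 𝒴 × 𝒮 with P_S(s) > 0 for all s, let s_max ∈ 𝒮 satisfy P_S(s_max) = 1/2 + δ for some δ > 0, and let Q be any probability distribution on 𝒴. If E_{s∼P_S}[ TV(P_{Y|S=s}, Q) ] − E_{s∼P_S}[ TV(P_{Y|S=s}, P_{Y|S=s_max}) ] ≤ ε/2, then TV(P_{Y|S=s_max}, Q) ≤ ε/(4δ). -/

import Mathlib

/-! By the triangle inequality, every `s` contributes at least `-TV(P_{Y|S=s_max}, Q)` to the gap,
while `s_max` itself contributes exactly `TV(P_{Y|S=s_max}, Q)`. Weighting by `P_S`, the gap is at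
least `(2 P_S(s_max) - 1) TV(P_{Y|S=s_max}, Q) = 2δ TV(P_{Y|S=s_max}, Q)`. -/

open Finset

noncomputable section

variable {𝒴 𝒮 : Type*} [Fintype 𝒴] [Fintype 𝒮]

/-- Total variation distance between two finitely supported distributions on `𝒴`,
`TV(p, q) = (1/2) ∑ y, |p y - q y|`. -/
def TV (p q : 𝒴 → ℝ) : ℝ := (1 / 2) * ∑ y, |p y - q y|

/-- Marginal distribution of `S` under the joint `P` of `(Y, S)`. -/
def margS (P : 𝒴 → 𝒮 → ℝ) (s : 𝒮) : ℝ := ∑ y, P y s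

/-- Conditional distribution of `Y` given `S = s`. -/
def condYS (P : 𝒴 → 𝒮 → ℝ) (s : 𝒮) (y : 𝒴) : ℝ := P y s / margS P s

lemma TV_self (p : 𝒴 → ℝ) : TV p p = 0 := by
  simp [TV]

lemma TV_comm (p q : 𝒴 → ℝ) : TV p q = TV q p := by
  simp only [TV, abs_sub_comm]

lemma TV_triangle (p q r : 𝒴 → ℝ) : TV p r ≤ TV p q + TV q r := by
  unfold TV
  rw [← mul_add, ← sum_add_distrib]
  gcongr with y
  exact abs_sub_le _ _ _

lemma neg_TV_le_TV_sub_TV (p q r : 𝒴 → ℝ) : -TV r q ≤ TV p q - TV p r := by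
  linarith [TV_triangle p q r, TV_comm q r]

lemma sum_margS (P : 𝒴 → 𝒮 → ℝ) : ∑ s, margS P s = ∑ y, ∑ s, P y s :=
  sum_comm

lemma two_mul_sub_one_mul_le_sum_mul {ι : Type*} [Fintype ι] (w f : ι → ℝ)
    (hw : ∀ i, 0 ≤ w i) (hw1 : ∑ i, w i = 1) (i₀ : ι) (T : ℝ)
    (hf₀ : f i₀ = T) (hf : ∀ i, -T ≤ f i) :
    (2 * w i₀ - 1) * T ≤ ∑ i, w i * f i := by
  have hshift : ∑ i, w i * (f i + T) = ∑ i, w i * f i + T := by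
    simp only [mul_add, sum_add_distrib, ← sum_mul, hw1, one_mul]
  have hpeak : w i₀ * (f i₀ + T) ≤ ∑ i, w i * (f i + T) :=
    single_le_sum (f := fun i => w i * (f i + T))
      (fun i _ => mul_nonneg (hw i) (by linarith [hf i])) (mem_univ i₀)
  rw [hf₀] at hpeak
  linarith

theorem tv_to_majority_conditional_general
    (P : 𝒴 → 𝒮 → ℝ)
    (hP1 : ∑ y, ∑ s, P y s = 1)
    (hS : ∀ s, 0 < margS P s)
    (smax : 𝒮) (δ : ℝ) (hδ : 0 < δ) (hsmax : margS P smax = 1 / 2 + δ)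
    (Q : 𝒴 → ℝ)
    (ε : ℝ)
    (hgap : (∑ s, margS P s * TV (condYS P s) Q)
        - (∑ s, margS P s * TV (condYS P s) (condYS P smax)) ≤ ε / 2) :
    TV (condYS P smax) Q ≤ ε / (4 * δ) := by
  set T := TV (condYS P smax) Q
  have hgain : (2 * margS P smax - 1) * T ≤
      ∑ s, margS P s * (TV (condYS P s) Q - TV (condYS P s) (condYS P smax)) :=
    two_mul_sub_one_mul_le_sum_mul _ _ (fun s => (hS s).le) ((sum_margS P).trans hP1) smax T
      (by rw [TV_self, sub_zero]) (fun s => neg_TV_le_TV_sub_TV _ _ _)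
  simp only [mul_sub, sum_sub_distrib, hsmax] at hgain
  rw [le_div_iff₀ (by positivity)]
  linarith

/-- If `P_S(s_max) = 1/2 + δ` with `δ > 0` and
`E_{s∼P_S}[TV(P_{Y|S=s}, Q)] - E_{s∼P_S}[TV(P_{Y|S=s}, P_{Y|S=s_max})] ≤ ε/2`, then
`TV(P_{Y|S=s_max}, Q) ≤ ε/(4δ)`. -/
theorem tv_to_majority_conditional
    (P : 𝒴 → 𝒮 → ℝ)
    (hP0 : ∀ y s, 0 ≤ P y s)
    (hP1 : ∑ y, ∑ s, P y s = 1)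
    (hS : ∀ s, 0 < margS P s)
    (smax : 𝒮) (δ : ℝ) (hδ : 0 < δ) (hsmax : margS P smax = 1 / 2 + δ)
    (Q : 𝒴 → ℝ) (hQ0 : ∀ y, 0 ≤ Q y) (hQ1 : ∑ y, Q y = 1)
    (ε : ℝ)
    (hgap : (∑ s, margS P s * TV (condYS P s) Q)
        - (∑ s, margS P s * TV (condYS P s) (condYS P smax)) ≤ ε / 2) :
    TV (condYS P smax) Q ≤ ε / (4 * δ) :=
  tv_to_majority_conditional_general P hP1 hS smax δ hδ hsmax Q ε hgap
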